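/- arXiv:0910.4995 — 2 statements merged into one kernel-verified Lean document; each statement's English description precedes it below -/
import Mathlib

section
/- Let X be a solution of the inviscid dyadic model on [0,T). If X satisfies the weak energy inequality (E(t) ≤ E(0) for all t ∈ [0,T)), then X satisfies the strong energy inequality (E(t) ≤ E(s) for all 0 ≤ s < t < T). Consequently, a solution satisfies the weak energy inequality if and only if it satisfies the strong energy inequality. -/
open MeasureTheory Set Filter Topology

/-- `X` is a solution of the inviscid dyadic model on the time set `D`
(typically `Set.Ico 0 T` or `Set.Ici 0`), with coefficients `k` bounded by `C * 2 ^ n`.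
The components of the solution are `X 1, X 2, ...`; by convention `X 0 ≡ 0` and `k 0 = 0`. -/
def IsDyadicSolutionOn (C : ℝ) (k : ℕ → ℝ) (X : ℕ → ℝ → ℝ) (D : Set ℝ) : Prop :=
  0 < C ∧ k 0 = 0 ∧
  (∀ n : ℕ, 1 ≤ n → 0 ≤ k n ∧ k n ≤ C * 2 ^ n) ∧
  (∀ t : ℝ, X 0 t = 0) ∧
  (∀ n : ℕ, 1 ≤ n → ∀ t ∈ D, HasDerivWithinAt (X n)
      (k (n - 1) * X (n - 1) t ^ 2 - k n * X n t * X (n + 1) t) D t) ∧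
  (∀ t ∈ D, Summable fun j : ℕ => X (j + 1) t ^ 2)

/-- The energy `E(t) = ∑_{j ≥ 1} X_j(t)^2`. -/
noncomputable def energy (X : ℕ → ℝ → ℝ) (t : ℝ) : ℝ :=
  ∑' j : ℕ, X (j + 1) t ^ 2

/-- The function `a(t) = sup_{n ≥ 1} (- k_n X_{n+1}(t))`. -/
noncomputable def classKfun (k : ℕ → ℝ) (X : ℕ → ℝ → ℝ) (t : ℝ) : ℝ :=
  ⨆ n : ℕ, -(k (n + 1) * X (n + 2) t)

/-- A solution is of class `K` if `a(t) = sup_{n ≥ 1} (- k_n X_{n+1}(t))` is locally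
integrable on `[0,∞)`. -/
def IsClassK (k : ℕ → ℝ) (X : ℕ → ℝ → ℝ) : Prop :=
  LocallyIntegrableOn (classKfun k X) (Set.Ici 0)

/-!
The partial energy `E_N = ∑_{j ≤ N} X_j²` has derivative `-2 k_N X_N² X_{N+1}`, so it decreases
while `X_{N+1} ≥ 0` and increases while `X_{N+1} ≤ 0`. Since `X_{N+1}' ≥ -k_{N+1} X_{N+2} X_{N+1}`
is bounded below by a linear function of `X_{N+1}`, an integrating factor shows that `X_{N+1}`
stays nonnegative once it is; hence on an interval `[a, t]` it is nonpositive up to some time `σ`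
and nonnegative afterwards. For `s ∈ [a, t]`: if `s ≤ σ` then `E_N(t) ≤ E_N(σ) ≤ E(σ) ≤ E(a)`
by the weak inequality, while `E_N(a) ≤ E_N(s)`; if `σ < s` then `E_N(t) ≤ E_N(s)`. In both cases
`E_N(t) ≤ E_N(s) + (E(a) - E_N(a))`, and `N → ∞` gives `E(t) ≤ E(s)`.
-/

lemma monotoneOn_Icc_of_hasDerivWithinAt_nonneg {f f' : ℝ → ℝ} {a b : ℝ}
    (hf : ∀ r ∈ Icc a b, HasDerivWithinAt f (f' r) (Icc a b) r)
    (hf' : ∀ r ∈ Ioo a b, 0 ≤ f' r) : MonotoneOn f (Icc a b) :=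
  monotoneOn_of_hasDerivWithinAt_nonneg (convex_Icc a b)
    (fun r hr => (hf r hr).continuousWithinAt)
    (fun r hr => (hf r (interior_subset hr)).mono interior_subset)
    (by rwa [interior_Icc])

lemma antitoneOn_Icc_of_hasDerivWithinAt_nonpos {f f' : ℝ → ℝ} {a b : ℝ}
    (hf : ∀ r ∈ Icc a b, HasDerivWithinAt f (f' r) (Icc a b) r)
    (hf' : ∀ r ∈ Ioo a b, f' r ≤ 0) : AntitoneOn f (Icc a b) :=
  antitoneOn_of_hasDerivWithinAt_nonpos (convex_Icc a b)
    (fun r hr => (hf r hr).continuousWithinAt)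
    (fun r hr => (hf r (interior_subset hr)).mono interior_subset)
    (by rwa [interior_Icc])

lemma exists_hasDerivWithinAt_Icc_of_continuousOn {c : ℝ → ℝ} {a b : ℝ}
    (hc : ContinuousOn c (Icc a b)) :
    ∃ P : ℝ → ℝ, ∀ r ∈ Icc a b, HasDerivWithinAt P (c r) (Icc a b) r := by
  refine ⟨fun u => ∫ x in a..u, c x, fun r hr => ?_⟩
  have : Fact (r ∈ Icc a b) := ⟨hr⟩
  exact intervalIntegral.integral_hasDerivWithinAt_right
    ((hc.mono (Icc_subset_Icc_right hr.2)).intervalIntegrable_of_Icc hr.1)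
    (hc.stronglyMeasurableAtFilter_nhdsWithin measurableSet_Icc r) (hc r hr)

/-- Multiplying by `exp (-P)` with `P' = c` makes `f` nondecreasing. -/
lemma nonneg_of_hasDerivWithinAt_ge_mul {f f' c : ℝ → ℝ} {a b : ℝ}
    (hf : ∀ r ∈ Icc a b, HasDerivWithinAt f (f' r) (Icc a b) r)
    (hc : ContinuousOn c (Icc a b)) (hf' : ∀ r ∈ Ioo a b, c r * f r ≤ f' r)
    (ha : 0 ≤ f a) : ∀ r ∈ Icc a b, 0 ≤ f r := by
  obtain ⟨P, hP⟩ := exists_hasDerivWithinAt_Icc_of_continuousOn hc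
  have hmono : MonotoneOn (fun r => f r * Real.exp (-P r)) (Icc a b) := by
    refine monotoneOn_Icc_of_hasDerivWithinAt_nonneg
      (fun r hr => (hf r hr).mul (hP r hr).neg.exp) fun r hr => ?_
    have := mul_nonneg (sub_nonneg.2 (hf' r hr)) (Real.exp_pos (-P r)).le
    simp only [Pi.neg_apply]
    nlinarith
  intro r hr
  have hfa : 0 ≤ f a * Real.exp (-P a) := mul_nonneg ha (Real.exp_pos _).le
  have hfr := hfa.trans (hmono ⟨le_rfl, hr.1.trans hr.2⟩ hr hr.1)
  exact nonneg_of_mul_nonneg_left hfr (Real.exp_pos _)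

lemma exists_nonpos_nonneg_of_nonneg_persists {f : ℝ → ℝ} {a t : ℝ} (hat : a ≤ t)
    (hf : ∀ r ∈ Icc a t, 0 ≤ f r → ∀ r' ∈ Icc r t, 0 ≤ f r') :
    ∃ σ ∈ Icc a t, (∀ r ∈ Ioo a σ, f r ≤ 0) ∧ ∀ r ∈ Ioo σ t, 0 ≤ f r := by
  set A := insert a {r ∈ Icc a t | f r < 0}
  have hA : BddAbove A := ⟨t, by rintro r (rfl | hr); exacts [hat, hr.1.2]⟩
  have haσ : a ≤ sSup A := le_csSup hA (mem_insert a _)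
  refine ⟨sSup A, ⟨haσ, csSup_le (insert_nonempty _ _) ?_⟩, fun r hr => ?_, fun r hr => ?_⟩
  · rintro r (rfl | hr)
    exacts [hat, hr.1.2]
  · obtain ⟨r', hr'A, hrr'⟩ := exists_lt_of_lt_csSup (insert_nonempty _ _) hr.2
    rcases hr'A with rfl | hr'
    · exact absurd hr.1 hrr'.not_gt
    · by_contra! hpos
      exact (hf r ⟨hr.1.le, hrr'.le.trans hr'.1.2⟩ hpos.le r' ⟨hrr'.le, hr'.1.2⟩).not_gt hr'.2
  · by_contra! hneg
    exact (le_csSup hA (Or.inr ⟨⟨haσ.trans hr.1.le, hr.2.le⟩, hneg⟩)).not_gt hr.1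

def partialEnergy (X : ℕ → ℝ → ℝ) (N : ℕ) (t : ℝ) : ℝ :=
  ∑ j ∈ Finset.range N, X (j + 1) t ^ 2

section Energy

variable {X : ℕ → ℝ → ℝ} {t : ℝ}

lemma partialEnergy_le_energy (h : Summable fun j : ℕ => X (j + 1) t ^ 2) (N : ℕ) :
    partialEnergy X N t ≤ energy X t :=
  h.sum_le_tsum _ fun _ _ => sq_nonneg _

lemma tendsto_partialEnergy (h : Summable fun j : ℕ => X (j + 1) t ^ 2) :
    Tendsto (fun N => partialEnergy X N t) atTop (𝓝 (energy X t)) :=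
  h.hasSum.tendsto_sum_nat

end Energy

namespace IsDyadicSolutionOn

variable {C : ℝ} {k : ℕ → ℝ} {X : ℕ → ℝ → ℝ} {D : Set ℝ} {a b s t : ℝ}

lemma hasDerivWithinAt (hX : IsDyadicSolutionOn C k X D) {n : ℕ} (hn : 1 ≤ n) (ht : t ∈ D) :
    HasDerivWithinAt (X n) (k (n - 1) * X (n - 1) t ^ 2 - k n * X n t * X (n + 1) t) D t :=
  hX.2.2.2.2.1 n hn t ht

lemma summable (hX : IsDyadicSolutionOn C k X D) (ht : t ∈ D) :
    Summable fun j : ℕ => X (j + 1) t ^ 2 :=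
  hX.2.2.2.2.2 t ht

lemma coeff_nonneg (hX : IsDyadicSolutionOn C k X D) (n : ℕ) : 0 ≤ k n := by
  obtain ⟨-, hk0, hk, -⟩ := hX
  rcases n with _ | n
  exacts [hk0.ge, (hk (n + 1) n.succ_pos).1]

lemma continuousOn (hX : IsDyadicSolutionOn C k X D) (n : ℕ) : ContinuousOn (X n) D := by
  rcases n with _ | n
  · exact continuousOn_const.congr fun r _ => hX.2.2.2.1 r
  · exact fun r hr => (hX.hasDerivWithinAt n.succ_pos hr).continuousWithinAt

lemma hasDerivWithinAt_partialEnergy (hX : IsDyadicSolutionOn C k X D) (N : ℕ) (ht : t ∈ D) :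
    HasDerivWithinAt (partialEnergy X N) (-(2 * k N * X N t ^ 2 * X (N + 1) t)) D t := by
  induction N with
  | zero =>
    have hzero : partialEnergy X 0 = fun _ => 0 := by ext; simp [partialEnergy]
    rw [hzero, hX.2.1]
    exact (hasDerivWithinAt_const t D 0).congr_deriv (by ring)
  | succ N ih =>
    have hN := hX.hasDerivWithinAt (n := N + 1) N.succ_pos ht
    rw [Nat.add_sub_cancel] at hN
    have hsplit : partialEnergy X (N + 1) = fun r => partialEnergy X N r + X (N + 1) r ^ 2 :=
      funext fun r => Finset.sum_range_succ _ _
    rw [hsplit]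
    refine (ih.add (hN.pow 2)).congr_deriv ?_
    push_cast
    ring

lemma component_nonneg_of_nonneg (hX : IsDyadicSolutionOn C k X D) {m : ℕ} (hm : 1 ≤ m)
    (hD : Icc a b ⊆ D) (ha : 0 ≤ X m a) : ∀ r ∈ Icc a b, 0 ≤ X m r := by
  refine nonneg_of_hasDerivWithinAt_ge_mul (c := fun r => -(k m * X (m + 1) r))
    (fun r hr => (hX.hasDerivWithinAt hm (hD hr)).mono hD)
    (continuousOn_const.mul ((hX.continuousOn (m + 1)).mono hD)).neg (fun r _ => ?_) ha
  have := mul_nonneg (hX.coeff_nonneg (m - 1)) (sq_nonneg (X (m - 1) r))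
  linarith

lemma exists_component_nonpos_nonneg (hX : IsDyadicSolutionOn C k X D) {m : ℕ} (hm : 1 ≤ m)
    (hat : a ≤ t) (hD : Icc a t ⊆ D) :
    ∃ σ ∈ Icc a t, (∀ r ∈ Ioo a σ, X m r ≤ 0) ∧ ∀ r ∈ Ioo σ t, 0 ≤ X m r :=
  exists_nonpos_nonneg_of_nonneg_persists hat fun _ hr hpos =>
    hX.component_nonneg_of_nonneg hm ((Icc_subset_Icc_left hr.1).trans hD) hpos

lemma monotoneOn_partialEnergy (hX : IsDyadicSolutionOn C k X D) {N : ℕ} (hD : Icc a b ⊆ D)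
    (h : ∀ r ∈ Ioo a b, X (N + 1) r ≤ 0) : MonotoneOn (partialEnergy X N) (Icc a b) :=
  monotoneOn_Icc_of_hasDerivWithinAt_nonneg
    (fun r hr => (hX.hasDerivWithinAt_partialEnergy N (hD hr)).mono hD) fun r hr => by
      have := mul_nonneg (mul_nonneg (hX.coeff_nonneg N) (sq_nonneg (X N r)))
        (neg_nonneg.2 (h r hr))
      linarith

lemma antitoneOn_partialEnergy (hX : IsDyadicSolutionOn C k X D) {N : ℕ} (hD : Icc a b ⊆ D)
    (h : ∀ r ∈ Ioo a b, 0 ≤ X (N + 1) r) : AntitoneOn (partialEnergy X N) (Icc a b) :=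
  antitoneOn_Icc_of_hasDerivWithinAt_nonpos
    (fun r hr => (hX.hasDerivWithinAt_partialEnergy N (hD hr)).mono hD) fun r hr => by
      have := mul_nonneg (mul_nonneg (hX.coeff_nonneg N) (sq_nonneg (X N r))) (h r hr)
      linarith

lemma partialEnergy_le_add_tail (hX : IsDyadicSolutionOn C k X D) (N : ℕ) (hD : Icc a t ⊆ D)
    (hweak : ∀ r ∈ Icc a t, energy X r ≤ energy X a) (hs : s ∈ Icc a t) :
    partialEnergy X N t ≤ partialEnergy X N s + (energy X a - partialEnergy X N a) := by
  have hat := hs.1.trans hs.2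
  obtain ⟨σ, hσ, hneg, hpos⟩ := hX.exists_component_nonpos_nonneg N.succ_pos hat hD
  have hσD : Icc σ t ⊆ D := (Icc_subset_Icc_left hσ.1).trans hD
  rcases le_or_gt s σ with hsσ | hσs
  · have hmono := hX.monotoneOn_partialEnergy ((Icc_subset_Icc_right hσ.2).trans hD) hneg
    have h₁ := hmono ⟨le_rfl, hs.1.trans hsσ⟩ ⟨hs.1, hsσ⟩ hs.1
    have h₂ := hX.antitoneOn_partialEnergy hσD hpos ⟨le_rfl, hσ.2⟩ ⟨hσ.2, le_rfl⟩ hσ.2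
    have h₃ := partialEnergy_le_energy (hX.summable (hD hσ)) N
    have h₄ := hweak σ hσ
    linarith
  · have h₁ := hX.antitoneOn_partialEnergy hσD hpos ⟨hσs.le, hs.2⟩ ⟨hσ.2, le_rfl⟩ hs.2
    have h₂ := partialEnergy_le_energy (hX.summable (hD ⟨le_rfl, hat⟩)) N
    linarith

lemma energy_le_of_forall_energy_le (hX : IsDyadicSolutionOn C k X D) (hD : Icc a t ⊆ D)
    (hweak : ∀ r ∈ Icc a t, energy X r ≤ energy X a) (hs : s ∈ Icc a t) :
    energy X t ≤ energy X s := by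
  have hat := hs.1.trans hs.2
  have hlim := (tendsto_partialEnergy (hX.summable (hD hs))).add
    ((tendsto_const_nhds (x := energy X a)).sub
      (tendsto_partialEnergy (hX.summable (hD ⟨le_rfl, hat⟩))))
  rw [sub_self, add_zero] at hlim
  exact le_of_tendsto_of_tendsto' (tendsto_partialEnergy (hX.summable (hD ⟨hat, le_rfl⟩))) hlim
    fun N => hX.partialEnergy_le_add_tail N hD hweak hs

end IsDyadicSolutionOn

/-- the weak energy inequality implies the strong energy inequality;
consequently the two are equivalent. -/
theorem weak_energy_iff_strong_energy
    (C : ℝ) (k : ℕ → ℝ) (X : ℕ → ℝ → ℝ) (T : ℝ)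
    (hX : IsDyadicSolutionOn C k X (Set.Ico 0 T)) :
    ((∀ t ∈ Set.Ico (0 : ℝ) T, energy X t ≤ energy X 0) →
      ∀ s ∈ Set.Ico (0 : ℝ) T, ∀ t ∈ Set.Ico (0 : ℝ) T, s < t →
        energy X t ≤ energy X s) ∧
    ((∀ t ∈ Set.Ico (0 : ℝ) T, energy X t ≤ energy X 0) ↔
      (∀ s ∈ Set.Ico (0 : ℝ) T, ∀ t ∈ Set.Ico (0 : ℝ) T, s < t →
        energy X t ≤ energy X s)) := by
  have weak_to_strong : (∀ t ∈ Ico (0 : ℝ) T, energy X t ≤ energy X 0) →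
      ∀ s ∈ Ico (0 : ℝ) T, ∀ t ∈ Ico (0 : ℝ) T, s < t → energy X t ≤ energy X s :=
    fun hweak s hs t ht hst => hX.energy_le_of_forall_energy_le (Icc_subset_Ico_right ht.2)
      (fun r hr => hweak r ⟨hr.1, hr.2.trans_lt ht.2⟩) ⟨hs.1, hst.le⟩
  refine ⟨weak_to_strong, weak_to_strong, fun hstrong t ht => ?_⟩
  rcases ht.1.eq_or_lt with h | h
  · rw [← h]
  · exact hstrong 0 ⟨le_rfl, h.trans ht.2⟩ t ht h
end

section
/- Let X^(1) and X^(2) be two global solutions of the inviscid dyadic model with the same initial condition, set Z_n = X_n^(1) − X_n^(2), Y_n = X_n^(1) + X_n^(2), and define ψ_n(t) = Σ_{i=1}^n Z_i(t)^2 / 2^i. Then ψ_n(0) = 0 and for all n ≥ 1 and t ≥ 0, d/dt ψ_n(t) = −Σ_{i=1}^n k_i Y_{i+1}(t) Z_i(t)^2 / 2^i − (k_n/2^n) Y_n(t) Z_n(t) Z_{n+1}(t). -/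
open MeasureTheory Set Filter Topology

/-!
Each `Z_i` solves the linearised system `Z_i' = k_{i-1} Y_{i-1} Z_{i-1} - (k_i/2)(Y_i Z_{i+1} + Z_i Y_{i+1})`.
Multiplying by `Z_i / 2^{i-1}`, the weight `2^{-i}` makes the cross term `k_i Y_i Z_i Z_{i+1} / 2^i`
appear once with each sign in consecutive equations, so the sum over `i ≤ n` telescopes, leaving the
diagonal terms and the boundary flux at `n` (the flux at `0` vanishes because `k_0 = 0`).
-/

section Algebra

variable (k : ℕ → ℝ)

def dyadicField (x : ℕ → ℝ) (n : ℕ) : ℝ :=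
  k (n - 1) * x (n - 1) ^ 2 - k n * x n * x (n + 1)

noncomputable def differenceField (y z : ℕ → ℝ) (n : ℕ) : ℝ :=
  k (n - 1) * y (n - 1) * z (n - 1) - k n * (y n * z (n + 1) + z n * y (n + 1)) / 2

theorem dyadicField_sub_dyadicField (x₁ x₂ : ℕ → ℝ) (n : ℕ) :
    dyadicField k x₁ n - dyadicField k x₂ n = differenceField k (x₁ + x₂) (x₁ - x₂) n := by
  simp only [dyadicField, differenceField, Pi.add_apply, Pi.sub_apply]
  ring

noncomputable def weightedFlux (y z : ℕ → ℝ) (j : ℕ) : ℝ :=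
  k j * y j * z j * z (j + 1) / 2 ^ j

theorem mul_differenceField_div_two_pow (y z : ℕ → ℝ) (i : ℕ) :
    z (i + 1) * differenceField k y z (i + 1) / 2 ^ i =
      -(k (i + 1) * y (i + 2) * z (i + 1) ^ 2 / 2 ^ (i + 1)) +
        (weightedFlux k y z i - weightedFlux k y z (i + 1)) := by
  simp only [differenceField, weightedFlux, Nat.add_sub_cancel, pow_succ]
  ring

theorem sum_mul_differenceField_div_two_pow (hk0 : k 0 = 0) (y z : ℕ → ℝ) (n : ℕ) :
    ∑ i ∈ Finset.range n, z (i + 1) * differenceField k y z (i + 1) / 2 ^ i =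
      -(∑ i ∈ Finset.range n, k (i + 1) * y (i + 2) * z (i + 1) ^ 2 / 2 ^ (i + 1)) -
        k n / 2 ^ n * y n * z n * z (n + 1) := by
  have hflux0 : weightedFlux k y z 0 = 0 := by simp [weightedFlux, hk0]
  rw [Finset.sum_congr rfl fun i _ => mul_differenceField_div_two_pow k y z i,
    Finset.sum_add_distrib, Finset.sum_neg_distrib, Finset.sum_range_sub', hflux0, weightedFlux]
  ring

end Algebra

theorem hasDerivWithinAt_sum_sq_div_two_pow {f : ℕ → ℝ → ℝ} {f' : ℕ → ℝ} {s : Set ℝ} {t : ℝ}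
    {n : ℕ} (hf : ∀ i ∈ Finset.range n, HasDerivWithinAt (f i) (f' i) s t) :
    HasDerivWithinAt (fun τ => ∑ i ∈ Finset.range n, f i τ ^ 2 / 2 ^ (i + 1))
      (∑ i ∈ Finset.range n, f i t * f' i / 2 ^ i) s t := by
  refine (HasDerivWithinAt.fun_sum fun i hi => ((hf i hi).pow 2).div_const (2 ^ (i + 1))).congr_deriv
    (Finset.sum_congr rfl fun i _ => ?_)
  simp only [pow_succ]
  ring

theorem IsDyadicSolutionOn.hasDerivWithinAt_sub {C : ℝ} {k : ℕ → ℝ} {X₁ X₂ : ℕ → ℝ → ℝ}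
    {D : Set ℝ} (h₁ : IsDyadicSolutionOn C k X₁ D) (h₂ : IsDyadicSolutionOn C k X₂ D)
    {n : ℕ} (hn : 1 ≤ n) {t : ℝ} (ht : t ∈ D) :
    HasDerivWithinAt (fun s => X₁ n s - X₂ n s)
      (differenceField k (fun j => X₁ j t + X₂ j t) (fun j => X₁ j t - X₂ j t) n) D t :=
  ((h₁.2.2.2.2.1 n hn t ht).sub (h₂.2.2.2.2.1 n hn t ht)).congr_deriv
    (dyadicField_sub_dyadicField k (X₁ · t) (X₂ · t) n)

/-- for two global solutions with the same initial condition, the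
weighted quantity `ψ_n(t) = ∑_{i=1}^n Z_i(t)²/2^i` satisfies `ψ_n(0) = 0` and
`d/dt ψ_n(t) = -∑_{i=1}^n k_i Y_{i+1} Z_i²/2^i - (k_n/2^n) Y_n Z_n Z_{n+1}`. -/
theorem psi_equation
    (C : ℝ) (k : ℕ → ℝ) (X₁ X₂ : ℕ → ℝ → ℝ)
    (h₁ : IsDyadicSolutionOn C k X₁ (Set.Ici 0))
    (h₂ : IsDyadicSolutionOn C k X₂ (Set.Ici 0))
    (hinit : ∀ n : ℕ, X₁ n 0 = X₂ n 0)
    (Z Y : ℕ → ℝ → ℝ)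
    (hZ : ∀ n t, Z n t = X₁ n t - X₂ n t)
    (hY : ∀ n t, Y n t = X₁ n t + X₂ n t)
    (ψ : ℕ → ℝ → ℝ)
    (hψ : ∀ n t, ψ n t = ∑ i ∈ Finset.range n, Z (i + 1) t ^ 2 / 2 ^ (i + 1)) :
    ∀ n : ℕ, 1 ≤ n →
      ψ n 0 = 0 ∧
      (∀ t ∈ Set.Ici (0 : ℝ),
        HasDerivWithinAt (ψ n)
          (-(∑ i ∈ Finset.range n,
              k (i + 1) * Y (i + 2) t * Z (i + 1) t ^ 2 / 2 ^ (i + 1)) -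
            k n / 2 ^ n * Y n t * Z n t * Z (n + 1) t)
          (Set.Ici 0) t) := by
  obtain rfl : ψ = _ := funext₂ hψ
  obtain rfl : Z = _ := funext₂ hZ
  obtain rfl : Y = _ := funext₂ hY
  intro n _
  refine ⟨by simp [hinit], fun t ht => ?_⟩
  have hdiff := hasDerivWithinAt_sum_sq_div_two_pow (n := n)
    (f := fun i s => X₁ (i + 1) s - X₂ (i + 1) s)
    fun i _ => h₁.hasDerivWithinAt_sub h₂ (Nat.le_add_left 1 i) ht
  exact hdiff.congr_deriv (sum_mul_differenceField_div_two_pow k h₁.2.1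
    (fun j => X₁ j t + X₂ j t) (fun j => X₁ j t - X₂ j t) n)
end
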